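/- arXiv:1508.07496 — 5 statements merged into one kernel-verified Lean document; each statement's English description precedes it below -/
import Mathlib

section
/- Let A be a group that embeds into a direct product ∏_{i ∈ I} B_i of groups via an injective homomorphism f. If the intersection of any finite family of nontrivial normal subgroups of A is nontrivial, then there exists an ultrafilter U on I such that the composition of f with the quotient map to the ultraproduct ∏_U B_i (the quotient by the normal subgroup of elements equal to 1 on a set in U) is injective. -/
variable {I : Type*} (F : Filter I) (B : I → Type*) [∀ i, Group (B i)]

/-- The kernel of the canonical map onto the reduced (filtered/ultra) product:
elements of the direct product equal to `1` on a set belonging to `F`. -/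
def filterKer : Subgroup (∀ i, B i) where
  carrier := {b | {i | b i = 1} ∈ F}
  one_mem' := by simp
  mul_mem' := by
    intro a b ha hb
    filter_upwards [ha, hb] with i hia hib
    simp [Set.mem_setOf_eq] at *
    simp [hia, hib]
  inv_mem' := by
    intro a ha
    filter_upwards [ha] with i hia
    simp_all

instance filterKer.normal : (filterKer F B).Normal := by
  constructor
  intro n hn g
  have hn' : {i | n i = 1} ∈ F := hn
  filter_upwards [hn'] with i hi
  show g i * n i * (g i)⁻¹ = 1
  simp [hi]

/-- Robinson–Amitsur for groups: if `A` is finitely subdirectly irreducible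
(the intersection of any nonempty finite family of nontrivial normal
subgroups is nontrivial) and `A` embeds into a direct product of groups,
then there is an ultrafilter `U` on the index set such that `A` embeds into
the corresponding ultraproduct. -/
theorem stmt5 {I : Type*} [Nonempty I] {A : Type*} [Group A]
    {B : I → Type*} [∀ i, Group (B i)]
    (f : A →* ∀ i, B i) (hf : Function.Injective f)
    (hfsi : ∀ T : Finset (Subgroup A), T.Nonempty →
      (∀ N ∈ T, N.Normal ∧ N ≠ ⊥) → T.inf id ≠ ⊥) :
    ∃ U : Ultrafilter I,
      Function.Injective ((QuotientGroup.mk' (filterKer ↑U B)).comp f) := by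
  classical
  set S : A → Set I := fun a => {i | f a i ≠ 1} with hS
  -- finite intersection property for the sets S a, a ≠ 1
  have hfip : ∀ u : Finset A, (∀ a ∈ u, a ≠ 1) → ∃ i, ∀ a ∈ u, f a i ≠ 1 := by
    intro u hu
    rcases u.eq_empty_or_nonempty with rfl | hne
    · exact ⟨Classical.arbitrary I, by simp⟩
    · set T : Finset (Subgroup A) := u.image (fun a => Subgroup.normalClosure {a}) with hT
      have hTne : T.Nonempty := hne.image _
      have hTprop : ∀ N ∈ T, N.Normal ∧ N ≠ ⊥ := by
        intro N hN
        simp only [hT, Finset.mem_image] at hN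
        obtain ⟨a, ha, rfl⟩ := hN
        refine ⟨Subgroup.normalClosure_normal, fun h => ?_⟩
        have hmem : a ∈ Subgroup.normalClosure ({a} : Set A) :=
          Subgroup.subset_normalClosure (Set.mem_singleton a)
        rw [h] at hmem
        exact hu a ha (Subgroup.mem_bot.mp hmem)
      have hinf := hfsi T hTne hTprop
      obtain ⟨c, hcmem, hc1⟩ : ∃ c, c ∈ T.inf id ∧ c ≠ 1 := by
        by_contra h
        push_neg at h
        exact hinf ((Subgroup.eq_bot_iff_forall _).mpr h)
      have hfc : f c ≠ 1 := fun h => hc1 (hf (h.trans (map_one f).symm))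
      obtain ⟨i, hi⟩ : ∃ i, f c i ≠ 1 := by
        by_contra h
        push_neg at h
        exact hfc (funext h)
      refine ⟨i, fun a ha hai => ?_⟩
      have hle : Subgroup.normalClosure ({a} : Set A) ≤
          ((Pi.evalMonoidHom B i).comp f).ker := by
        apply Subgroup.normalClosure_le_normal
        intro x hx
        rw [Set.mem_singleton_iff] at hx
        subst hx
        simpa [MonoidHom.mem_ker] using hai
      have hcN : c ∈ Subgroup.normalClosure ({a} : Set A) := by
        have hmemT : Subgroup.normalClosure ({a} : Set A) ∈ T :=
          Finset.mem_image.mpr ⟨a, ha, rfl⟩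
        exact (Finset.inf_le hmemT : T.inf id ≤ _) hcmem
      exact hi (hle hcN)
  -- build the filter generated by the S a, a ≠ 1
  set C : Set (Set I) := S '' {a | a ≠ 1} with hC
  have hgen : Filter.NeBot (Filter.generate C) := by
    rw [Filter.generate_neBot_iff]
    intro t hts ht
    -- choose representatives
    have hrep : ∀ s ∈ t, ∃ a : A, a ≠ 1 ∧ S a = s := by
      intro s hs
      obtain ⟨a, ha, rfl⟩ := hts hs
      exact ⟨a, ha, rfl⟩
    choose g hg1 hg2 using hrep
    set u : Finset A := ht.toFinset.attach.image
      (fun s => g s.1 (ht.mem_toFinset.mp s.2)) with hu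
    obtain ⟨i, hi⟩ := hfip u (by
      intro a ha
      simp only [hu, Finset.mem_image, Finset.mem_attach] at ha
      obtain ⟨⟨s, hs⟩, -, rfl⟩ := ha
      exact hg1 s (by simpa using hs))
    refine ⟨i, ?_⟩
    intro s hs
    have hsu : g s hs ∈ u := by
      simp only [hu, Finset.mem_image]
      exact ⟨⟨s, by simpa using hs⟩, Finset.mem_attach _ _, rfl⟩
    have := hi _ hsu
    rw [← hg2 s hs]
    exact this
  refine ⟨Ultrafilter.of (Filter.generate C), ?_⟩
  rw [injective_iff_map_eq_one]
  intro a ha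
  by_contra h1
  have hSa : S a ∈ (Ultrafilter.of (Filter.generate C) : Filter I) :=
    Ultrafilter.of_le _ (Filter.mem_generate_of_mem ⟨a, h1, rfl⟩)
  have hker : f a ∈ filterKer (↑(Ultrafilter.of (Filter.generate C))) B :=
    (QuotientGroup.eq_one_iff (f a)).mp ha
  have hcompl : {i | f a i = 1} ∈ (Ultrafilter.of (Filter.generate C) : Filter I) := hker
  have : ({i | f a i = 1} ∩ S a : Set I) ∈
      (Ultrafilter.of (Filter.generate C) : Filter I) := Filter.inter_mem hcompl hSa
  have hempty : ({i | f a i = 1} ∩ S a : Set I) = ∅ := by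
    ext i; simp [hS]
  rw [hempty] at this
  exact Filter.empty_notMem _ this
end

section
/- For a group A, if for every embedding f of A into an arbitrary direct product ∏_{i∈I} B_i of groups there exists an ultrafilter U on I such that the induced map A → ∏_U B_i is injective, then A is finitely subdirectly irreducible: the intersection of any two nontrivial normal subgroups of A is nontrivial. -/
variable {I : Type*} (F : Filter I) (B : I → Type*) [∀ i, Group (B i)]

def pairFam {A : Type u} [Group A] (N₁ N₂ : Subgroup A) [N₁.Normal] [N₂.Normal] :
    ULift.{u} Bool → Type u :=
  fun i => cond i.down (A ⧸ N₁) (A ⧸ N₂)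

instance pairFam.group {A : Type u} [Group A] (N₁ N₂ : Subgroup A) [N₁.Normal] [N₂.Normal] :
    ∀ i, Group (pairFam N₁ N₂ i)
  | ⟨true⟩ => inferInstanceAs (Group (A ⧸ N₁))
  | ⟨false⟩ => inferInstanceAs (Group (A ⧸ N₂))

def pairHom {A : Type u} [Group A] (N₁ N₂ : Subgroup A) [N₁.Normal] [N₂.Normal] :
    A →* ∀ i, pairFam N₁ N₂ i where
  toFun a := fun i => match i with
    | ⟨true⟩ => (QuotientGroup.mk a : A ⧸ N₁)
    | ⟨false⟩ => (QuotientGroup.mk a : A ⧸ N₂)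
  map_one' := by funext i; rcases i with ⟨b|b⟩ <;> rfl
  map_mul' x y := by funext i; rcases i with ⟨b|b⟩ <;> rfl

/-- Converse direction of the Robinson–Amitsur theorem for groups: if every
embedding of `A` into a direct product of groups can be composed with the
quotient map to a suitable ultraproduct so as to remain injective, then `A`
is finitely subdirectly irreducible: the intersection of any two nontrivial
normal subgroups of `A` is nontrivial. -/
theorem stmt6 {A : Type u} [Group A]
    (h : ∀ (I : Type u) [Nonempty I] (B : I → Type u) [∀ i, Group (B i)]
      (f : A →* ∀ i, B i), Function.Injective f →
      ∃ U : Ultrafilter I,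
        Function.Injective ((QuotientGroup.mk' (filterKer ↑U B)).comp f)) :
    ∀ N₁ N₂ : Subgroup A, N₁.Normal → N₂.Normal →
      N₁ ≠ ⊥ → N₂ ≠ ⊥ → N₁ ⊓ N₂ ≠ ⊥ := by
  intro N₁ N₂ hN₁ hN₂ h₁ h₂ hbot
  obtain ⟨U, hU⟩ := h (ULift Bool) (pairFam N₁ N₂) (pairHom N₁ N₂) (by
    rw [injective_iff_map_eq_one]
    intro a ha
    have h1 : a ∈ N₁ := by
      have := congrFun ha ⟨true⟩
      exact (QuotientGroup.eq_one_iff a).mp this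
    have h2 : a ∈ N₂ := by
      have := congrFun ha ⟨false⟩
      exact (QuotientGroup.eq_one_iff a).mp this
    have : a ∈ N₁ ⊓ N₂ := ⟨h1, h2⟩
    rwa [hbot, Subgroup.mem_bot] at this)
  rcases U.mem_or_compl_mem {⟨true⟩} with ht | hf
  · obtain ⟨⟨a, ha⟩, hane⟩ := (Subgroup.ne_bot_iff_exists_ne_one.mp h₁)
    apply fun h => hane (Subtype.ext h)
    have : ((QuotientGroup.mk' (filterKer ↑U (pairFam N₁ N₂))).comp (pairHom N₁ N₂)) a = 1 := by
      rw [MonoidHom.comp_apply, ← (QuotientGroup.mk' _).map_one,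
        QuotientGroup.mk'_eq_mk' ]
      refine ⟨(pairHom N₁ N₂ a)⁻¹, ?_, by group⟩
      show {i | (pairHom N₁ N₂ a)⁻¹ i = 1} ∈ U
      apply U.toFilter.sets_of_superset ht
      rintro ⟨b|b⟩ hi
      · exact absurd hi (by simp)
      · have : (pairHom N₁ N₂ a) ⟨true⟩ = 1 := (QuotientGroup.eq_one_iff (a : A)).mpr ha
        show ((pairHom N₁ N₂ a) ⟨true⟩)⁻¹ = 1
        rw [this]; exact inv_one
    have h1 : ((QuotientGroup.mk' (filterKer ↑U (pairFam N₁ N₂))).comp (pairHom N₁ N₂)) 1 = 1 :=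
      map_one _
    exact hU (this.trans h1.symm)
  · obtain ⟨⟨a, ha⟩, hane⟩ := (Subgroup.ne_bot_iff_exists_ne_one.mp h₂)
    apply fun h => hane (Subtype.ext h)
    have : ((QuotientGroup.mk' (filterKer ↑U (pairFam N₁ N₂))).comp (pairHom N₁ N₂)) a = 1 := by
      rw [MonoidHom.comp_apply, ← (QuotientGroup.mk' _).map_one,
        QuotientGroup.mk'_eq_mk' ]
      refine ⟨(pairHom N₁ N₂ a)⁻¹, ?_, by group⟩
      show {i | (pairHom N₁ N₂ a)⁻¹ i = 1} ∈ U
      apply U.toFilter.sets_of_superset hf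
      rintro ⟨b|b⟩ hi
      · have : (pairHom N₁ N₂ a) ⟨false⟩ = 1 := (QuotientGroup.eq_one_iff (a : A)).mpr ha
        show ((pairHom N₁ N₂ a) ⟨false⟩)⁻¹ = 1
        rw [this]; exact inv_one
      · exact absurd hi (by simp)
    have h1 : ((QuotientGroup.mk' (filterKer ↑U (pairFam N₁ N₂))).comp (pairHom N₁ N₂)) 1 = 1 :=
      map_one _
    exact hU (this.trans h1.symm)
end

section
/- A free semigroup on at least two generators is not finitely subdirectly irreducible: if x and y are distinct free generators of a free semigroup G, then the semigroup congruence generated by the pair (x, x²) and the semigroup congruence generated by the pair (y, y²) intersect in the trivial (diagonal) congruence. -/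
/-!
Let a letter `a` act on words by prepending it, except that `x` is not prepended to a word that
already starts with `x`. This gives a semigroup homomorphism from the free semigroup into
`Function.End (List α)` in which `x` is idempotent, so its kernel contains the congruence
generated by `(x, x²)`; evaluated at the empty word it collapses every run of `x`'s to a single
`x`. A word is recovered from its `x`-collapse and its `y`-collapse: both start with the first
letter of the word, which differs from `x` or from `y`, so one of the two collapses peels it off
unchanged; that fixes the first letter of the rest, which lets the other collapse peel it off too.
-/

namespace List

variable {α : Type*} [DecidableEq α]

def consCollapse (x a : α) (s : List α) : List α :=
  if a = x ∧ s.head? = some x then s else a :: s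

def collapse (x : α) (l : List α) : List α :=
  l.foldr (consCollapse x) []

variable {x y a : α} {s t l m : List α}

@[simp]
theorem collapse_cons : collapse x (a :: l) = consCollapse x a (collapse x l) := rfl

theorem consCollapse_of_ne (h : a ≠ x) : consCollapse x a s = a :: s := by
  simp [consCollapse, h]

@[simp]
theorem head?_consCollapse : (consCollapse x a s).head? = some a := by
  unfold consCollapse
  split_ifs with h
  · rw [h.1, h.2]
  · rfl

theorem consCollapse_self_idem : consCollapse x x (consCollapse x x s) = consCollapse x x s := by
  rw [consCollapse, if_pos ⟨rfl, head?_consCollapse⟩]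

theorem eq_of_consCollapse_eq (hst : s.head? = t.head?)
    (h : consCollapse x a s = consCollapse x a t) : s = t := by
  by_cases hs : a = x ∧ s.head? = some x
  · have ht : a = x ∧ t.head? = some x := hst ▸ hs
    rwa [consCollapse, if_pos hs, consCollapse, if_pos ht] at h
  · have ht : ¬(a = x ∧ t.head? = some x) := hst ▸ hs
    rw [consCollapse, if_neg hs, consCollapse, if_neg ht] at h
    exact (cons_inj_right a).1 h

@[simp]
theorem head?_collapse : (collapse x l).head? = l.head? := by
  cases l <;> simp [collapse]

theorem collapse_tail_eq_of_ne (hax : a ≠ x) (hx : collapse x (a :: l) = collapse x (a :: m))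
    (hy : collapse y (a :: l) = collapse y (a :: m)) :
    collapse x l = collapse x m ∧ collapse y l = collapse y m := by
  simp only [collapse_cons, consCollapse_of_ne hax, cons.injEq, true_and] at hx
  have hlm : l.head? = m.head? := by simpa using congrArg head? hx
  exact ⟨hx, eq_of_consCollapse_eq (by simpa using hlm) (by simpa using hy)⟩

theorem eq_of_collapse_eq (hxy : x ≠ y) :
    ∀ {l m : List α}, collapse x l = collapse x m → collapse y l = collapse y m → l = m
  | [], [], _, _ => rfl
  | [], _ :: _, hx, _ | _ :: _, [], hx, _ => by simpa using congrArg head? hx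
  | a :: l, b :: m, hx, hy => by
    obtain rfl : a = b := by simpa using congrArg head? hx
    have htail : collapse x l = collapse x m ∧ collapse y l = collapse y m := by
      by_cases hax : a = x
      · exact (collapse_tail_eq_of_ne (hax ▸ hxy) hy hx).symm
      · exact collapse_tail_eq_of_ne hax hx hy
    rw [eq_of_collapse_eq hxy htail.1 htail.2]

end List

theorem Con.conGen_le_ker_of_isIdempotentElem {M N : Type*} [Semigroup M] [Semigroup N]
    (f : M →ₙ* N) {m : M} (hm : IsIdempotentElem (f m)) :
    conGen (fun p q : M => p = m ∧ q = m * m) ≤ Con.ker f := by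
  rw [Con.conGen_le]
  rintro p q ⟨rfl, rfl⟩
  rw [Con.ker_rel, map_mul, hm]

namespace FreeSemigroup

variable {α : Type*} [DecidableEq α]

def collapseHom (x : α) : FreeSemigroup α →ₙ* Function.End (List α) :=
  lift (List.consCollapse x)

theorem isIdempotentElem_collapseHom_of (x : α) : IsIdempotentElem (collapseHom x (of x)) :=
  funext fun _ => List.consCollapse_self_idem

theorem collapseHom_apply_nil (x : α) (w : FreeSemigroup α) :
    collapseHom x w [] = (toFreeMonoid w).toList.collapse x := by
  induction w with
  | ih1 a => rfl
  | ih2 a w _ ih =>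
    rw [map_mul, map_mul, FreeMonoid.toList_mul, toFreeMonoid_of]
    exact congrArg (List.consCollapse x a) ih

theorem eq_of_collapseHom_eq {x y : α} (hxy : x ≠ y) {u v : FreeSemigroup α}
    (hx : collapseHom x u = collapseHom x v) (hy : collapseHom y u = collapseHom y v) :
    u = v := by
  have key (z : α) (h : collapseHom z u = collapseHom z v) :
      (toFreeMonoid u).toList.collapse z = (toFreeMonoid v).toList.collapse z := by
    rw [← collapseHom_apply_nil, ← collapseHom_apply_nil, h]
  exact toFreeMonoid_injective (List.eq_of_collapse_eq hxy (key x hx) (key y hy))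

end FreeSemigroup

/-- A free semigroup on at least two generators is not finitely subdirectly
irreducible: for distinct free generators `x ≠ y`, the semigroup congruence
generated by `(x, x²)` and the one generated by `(y, y²)` intersect in the
diagonal. -/
theorem stmt8 {α : Type*} (x y : α) (hxy : x ≠ y) :
    ∀ a b : FreeSemigroup α,
      (conGen (fun p q : FreeSemigroup α =>
          p = FreeSemigroup.of x ∧ q = FreeSemigroup.of x * FreeSemigroup.of x) ⊓
       conGen (fun p q : FreeSemigroup α =>
          p = FreeSemigroup.of y ∧ q = FreeSemigroup.of y * FreeSemigroup.of y)) a b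
      → a = b := by
  classical
  intro a b hab
  rw [Con.inf_iff_and] at hab
  have hx := Con.conGen_le_ker_of_isIdempotentElem _
    (FreeSemigroup.isIdempotentElem_collapseHom_of x) hab.1
  have hy := Con.conGen_le_ker_of_isIdempotentElem _
    (FreeSemigroup.isIdempotentElem_collapseHom_of y) hab.2
  exact FreeSemigroup.eq_of_collapseHom_eq hxy hx hy
end

section
/- Suppose every surjective group homomorphism from a binary direct product B₁ × B₂ onto a nontrivial group A factors through one of the two projections. Then for any surjective homomorphism f : ∏_{i∈I} B_i → A, the collection U of subsets J ⊆ I such that f factors through the canonical projection ∏_{i∈I} B_i → ∏_{i∈J} B_i is an ultrafilter on I. -/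
/-- A (proper) filter on `I`, encoded as a set of subsets of `I`. -/
def IsProperFilterSet {I : Type*} (F : Set (Set I)) : Prop :=
  Set.univ ∈ F ∧ ∅ ∉ F ∧ (∀ s ∈ F, ∀ t ∈ F, s ∩ t ∈ F) ∧ ∀ s ∈ F, ∀ t : Set I, s ⊆ t → t ∈ F

/-- An ultrafilter on `I`, encoded as a set of subsets of `I`: a proper filter
containing, for each subset, either it or its complement. -/
def IsUltrafilterSet {I : Type*} (F : Set (Set I)) : Prop :=
  IsProperFilterSet F ∧ ∀ s : Set I, s ∈ F ∨ sᶜ ∈ F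

/-- The canonical projection of a direct product of groups onto the
subproduct indexed by `J ⊆ I`. -/
def projHom {I : Type u} (B : I → Type u) [∀ i, Group (B i)] (J : Set I) :
    (∀ i, B i) →* ∀ j : J, B j :=
  Pi.monoidHom fun j => Pi.evalMonoidHom B j

/-!
The factorization of `f` through `∏_{i∈J} Bᵢ` is the statement that `f` only depends on the
coordinates in `J`, and the sets with this property always form a proper filter once `f` is not
constant. For the ultrafilter property, write `∏ᵢ Bᵢ ≅ ∏_{i∈J} Bᵢ × ∏_{i∉J} Bᵢ` and apply the
binary hypothesis to `f` transported along this isomorphism.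
-/

theorem DependsOn.inter {ι β : Type*} {α : ι → Type*} {f : (∀ i, α i) → β} {s t : Set ι}
    (hs : DependsOn f s) (ht : DependsOn f t) : DependsOn f (s ∩ t) := by
  classical
  intro x y hxy
  calc f x = f (s.piecewise x y) := hs fun i hi => by simp [hi]
    _ = f y := ht fun i hi => by
      by_cases his : i ∈ s
      · simp [his, hxy i ⟨his, hi⟩]
      · simp [his]

theorem isProperFilterSet_setOf_dependsOn {ι β : Type*} {α : ι → Type*} {f : (∀ i, α i) → β}
    (hf : ∃ x y, f x ≠ f y) : IsProperFilterSet {s | DependsOn f s} := by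
  obtain ⟨x, y, hxy⟩ := hf
  exact ⟨dependsOn_univ f, fun h => hxy (DependsOn.empty h x y),
    fun _ hs _ ht => hs.inter ht, fun _ hs _ hst => hs.mono hst⟩

@[simps!]
def MulEquiv.piEquivPiSubtypeProd {ι : Type*} (p : ι → Prop) [DecidablePred p]
    (M : ι → Type*) [∀ i, Mul (M i)] :
    (∀ i, M i) ≃* (∀ i : Subtype p, M i) × (∀ i : {i // ¬p i}, M i) :=
  { Equiv.piEquivPiSubtypeProd p M with map_mul' := fun _ _ => rfl }

theorem dependsOn_iff_exists_eq_comp_projHom {I : Type u} (B : I → Type u) [∀ i, Group (B i)]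
    {A : Type*} [Monoid A] (f : (∀ i, B i) →* A) (J : Set I) :
    DependsOn f J ↔ ∃ g : (∀ j : J, B j) →* A, f = g.comp (projHom B J) := by
  classical
  constructor
  · intro hJ
    let e := MulEquiv.piEquivPiSubtypeProd (· ∈ J) B
    refine ⟨(f.comp e.symm.toMonoidHom).comp (MonoidHom.inl _ _), MonoidHom.ext fun x => ?_⟩
    exact hJ fun i hi => by simp [e, hi]; rfl
  · rintro ⟨g, rfl⟩ x y hxy
    exact congrArg g (funext fun j => hxy j j.2)

/-- If every surjective homomorphism from a binary direct product of groups
onto the nontrivial group `A` factors through one of the two projections,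
then for any surjective homomorphism `f : ∏ᵢ Bᵢ →* A`, the collection of
subsets `J ⊆ I` such that `f` factors through the projection onto `∏_{i∈J} Bᵢ`
is an ultrafilter on `I`. -/
theorem stmt12 {A : Type u} [Group A] [Nontrivial A]
    (hbin : ∀ (B₁ B₂ : Type u) [Group B₁] [Group B₂] (g : B₁ × B₂ →* A),
      Function.Surjective g →
      (∃ g₁ : B₁ →* A, g = g₁.comp (MonoidHom.fst B₁ B₂)) ∨
      (∃ g₂ : B₂ →* A, g = g₂.comp (MonoidHom.snd B₁ B₂)))
    {I : Type u} (B : I → Type u) [∀ i, Group (B i)]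
    (f : (∀ i, B i) →* A) (hf : Function.Surjective f) :
    IsUltrafilterSet {J : Set I | ∃ g : (∀ j : J, B j) →* A,
      f = g.comp (projHom B J)} := by
  have hU : {J : Set I | ∃ g : (∀ j : J, B j) →* A, f = g.comp (projHom B J)} =
      {J | DependsOn f J} :=
    Set.ext fun J => (dependsOn_iff_exists_eq_comp_projHom B f J).symm
  have hf_ne : ∃ x y, f x ≠ f y := by
    obtain ⟨a, b, hab⟩ := exists_pair_ne A
    obtain ⟨x, rfl⟩ := hf a
    obtain ⟨y, rfl⟩ := hf b
    exact ⟨x, y, hab⟩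
  refine ⟨hU ▸ isProperFilterSet_setOf_dependsOn hf_ne, fun J => ?_⟩
  classical
  let e := MulEquiv.piEquivPiSubtypeProd (· ∈ J) B
  have hfe : f = (f.comp e.symm.toMonoidHom).comp e.toMonoidHom := by ext; simp
  -- `fst ∘ e` and `snd ∘ e` are `projHom B J` and `projHom B Jᶜ` by definition,
  -- `{i // i ∉ J}` being `↥Jᶜ` up to unfolding.
  rcases hbin _ _ (f.comp e.symm.toMonoidHom) (hf.comp e.symm.surjective) with ⟨g, hg⟩ | ⟨g, hg⟩
  · exact Or.inl ⟨g, by rw [hfe, hg]; rfl⟩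
  · exact Or.inr ⟨g, by rw [hfe, hg]; rfl⟩
end

section
/- Let κ > 2 be a cardinal and A a group with more than one element. Suppose that every surjective homomorphism from a direct product of fewer than κ groups onto A factors through one of the canonical projections. Then for any surjective homomorphism f : ∏_{i∈I} B_i → A (I arbitrary), the ultrafilter U = {J ⊆ I : f factors through π_J} is κ-complete, and f factors through the canonical homomorphism onto the ultraproduct ∏_U B_i. -/
/-!
Let `U` be the family of sets `J ⊆ I` such that `f` kills every element that is trivial on `J`,
i.e. such that `f` factors through `π_J`. It is a filter (split an element into a part trivial
on `J` and a part trivial off `J`), and it is proper because `f ≠ 1`. Given a map `p` from `I`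
to a set of fewer than `κ` labels, regroup `∏ᵢ Bᵢ` as the product over the labels of the
subproducts over the fibers of `p`; the hypothesis makes `f` factor through one of these
subproducts, so some fiber lies in `U`. Two labels make `U` an ultrafilter; labelling each `i`
by a member of a family `T ⊆ U` that misses it gives `⋂₀ T ∈ U`. Finally the kernel of the
map onto the ultraproduct consists of elements trivial on a member of `U`, so `f` kills it.
-/

variable {I : Type*} (F : Filter I) (B : I → Type*) [∀ i, Group (B i)]

/-- A filter `F` is `κ`-complete if the intersection of any nonempty family of
fewer than `κ` members of `F` belongs to `F`. -/
def FilterKComplete {J : Type u} (F : Filter J) (κ : Cardinal.{u}) : Prop :=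
  ∀ T : Set (Set J), T.Nonempty → (∀ s ∈ T, s ∈ F) → Cardinal.mk T < κ → ⋂₀ T ∈ F

open Cardinal

theorem MonoidHom.exists_eq_comp_iff_ker_le {G H K : Type*} [Group G] [Group H] [Group K]
    {p : G →* H} (hp : Function.Surjective p) (f : G →* K) :
    (∃ g : H →* K, f = g.comp p) ↔ p.ker ≤ f.ker := by
  constructor
  · rintro ⟨g, rfl⟩ x hx
    simp [MonoidHom.mem_ker.mp hx]
  · intro hle
    exact ⟨p.liftOfSurjective hp ⟨f, hle⟩, (p.liftOfRightInverse_comp _ _ ⟨f, hle⟩).symm⟩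

namespace Filter

variable {I : Type u} {F : Filter I} {κ : Cardinal.{u}}

theorem mem_or_compl_mem_of_forall_exists_fiber_mem (hκ : 2 < κ)
    (hF : ∀ (T : Type u) (p : I → T), #T < κ → ∃ t, p ⁻¹' {t} ∈ F) (s : Set I) :
    s ∈ F ∨ sᶜ ∈ F := by
  classical
  obtain ⟨⟨t⟩, ht⟩ := hF (ULift.{u} Bool) (fun i => ULift.up (decide (i ∈ s))) (by simpa using hκ)
  cases t
  · exact Or.inr (mem_of_superset ht fun i hi => by simpa using hi)
  · exact Or.inl (mem_of_superset ht fun i hi => by simpa using hi)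

theorem filterKComplete_of_forall_exists_fiber_mem
    (hF : ∀ (T : Type u) (p : I → T), #T < κ → ∃ t, p ⁻¹' {t} ∈ F) :
    FilterKComplete F κ := by
  classical
  rintro T ⟨s₀, hs₀⟩ hTF hcard
  -- Send each `i` to a member of `T` missing it, if there is one; a fiber lying in `F`
  -- then meets its own label `s` only inside `⋂₀ T`.
  let p : I → T := fun i =>
    if h : ∃ s ∈ T, i ∉ s then ⟨h.choose, h.choose_spec.1⟩ else ⟨s₀, hs₀⟩
  obtain ⟨s, hs⟩ := hF T p hcard
  refine mem_of_superset (inter_mem (hTF s s.2) hs) fun i ⟨his, hpi⟩ => ?_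
  by_contra hi
  have h : ∃ s ∈ T, i ∉ s := by simpa [Set.mem_sInter] using hi
  have hps : p i = s := hpi
  simp only [p, dif_pos h] at hps
  subst hps
  exact h.choose_spec.2 his

end Filter

def Ultrafilter.ofMemOrComplMem {α : Type*} (F : Filter α) [F.NeBot]
    (h : ∀ s, s ∈ F ∨ sᶜ ∈ F) : Ultrafilter α :=
  Ultrafilter.ofComplNotMemIff F fun s =>
    ⟨fun hs => (h s).resolve_right hs,
      fun hs hsc => F.empty_notMem (by simpa using Filter.inter_mem hs hsc)⟩

@[simp]
theorem projHom_apply {I : Type u} (B : I → Type u) [∀ i, Group (B i)] (J : Set I)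
    (b : ∀ i, B i) (j : J) : projHom B J b j = b j :=
  rfl

theorem projHom_surjective {I : Type u} (B : I → Type u) [∀ i, Group (B i)] (J : Set I) :
    Function.Surjective (projHom B J) := by
  classical
  intro c
  refine ⟨fun i => if h : i ∈ J then c ⟨i, h⟩ else 1, funext fun j => ?_⟩
  simp [j.2]

theorem mem_ker_projHom {I : Type u} {B : I → Type u} [∀ i, Group (B i)] {J : Set I}
    {b : ∀ i, B i} : b ∈ (projHom B J).ker ↔ ∀ i ∈ J, b i = 1 := by
  simp [MonoidHom.mem_ker, funext_iff]

section SupportFilter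

variable {I : Type u} {B : I → Type u} [∀ i, Group (B i)] {A : Type u} [Group A]

def supportFilter (f : (∀ i, B i) →* A) : Filter I where
  sets := {J | (projHom B J).ker ≤ f.ker}
  univ_sets b hb := by
    rw [show b = 1 from funext fun i => mem_ker_projHom.mp hb i (Set.mem_univ i)]
    exact one_mem _
  sets_of_superset {J K} hJ hJK b hb :=
    hJ (mem_ker_projHom.mpr fun i hi => mem_ker_projHom.mp hb i (hJK hi))
  inter_sets {J K} hJ hK b hb := by
    classical
    -- `b` is the product of a factor vanishing on `J` and a factor vanishing on `K`.
    have hsplit : b = J.piecewise (1 : ∀ i, B i) b * J.piecewise b 1 := by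
      rw [← Set.piecewise_mul, one_mul, mul_one, Set.piecewise_same]
    rw [hsplit]
    refine mul_mem (hJ (mem_ker_projHom.mpr fun i hi => by simp [hi]))
      (hK (mem_ker_projHom.mpr fun i hi => ?_))
    by_cases hiJ : i ∈ J
    · simpa [hiJ] using mem_ker_projHom.mp hb i ⟨hiJ, hi⟩
    · simp [hiJ]

variable {f : (∀ i, B i) →* A}

theorem mem_supportFilter_iff {J : Set I} :
    J ∈ supportFilter f ↔ ∃ g : (∀ j : J, B j) →* A, f = g.comp (projHom B J) :=
  (MonoidHom.exists_eq_comp_iff_ker_le (projHom_surjective B J) f).symm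

theorem supportFilter_neBot (hf : f ≠ 1) : (supportFilter f).NeBot := by
  refine ⟨fun h => hf (MonoidHom.ext fun _ => ?_)⟩
  rw [← Filter.empty_mem_iff_bot] at h
  exact h (mem_ker_projHom.mpr fun _ hi => hi.elim)

theorem filterKer_supportFilter_le_ker : filterKer (supportFilter f) B ≤ f.ker :=
  fun _ hb => hb (mem_ker_projHom.mpr fun _ hi => hi)

end SupportFilter

/-- Condition (i) of Bergman–Nahlus. -/
def SmallProductSurjectionsFactor (κ : Cardinal.{u}) (A : Type u) [Group A] : Prop :=
  ∀ (J : Type u) (C : J → Type u) [∀ j, Group (C j)],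
    #J < κ → ∀ g : (∀ j, C j) →* A, Function.Surjective g →
      ∃ j₀ : J, ∃ h : C j₀ →* A, g = h.comp (Pi.evalMonoidHom C j₀)

def piFibersHom {I : Type u} (B : I → Type u) [∀ i, Group (B i)] {T : Type u} (p : I → T) :
    (∀ t, ∀ i : {i // p i = t}, B i) →* ∀ i, B i where
  toFun c i := c (p i) ⟨i, rfl⟩
  map_one' := rfl
  map_mul' _ _ := rfl

theorem exists_fiber_mem_supportFilter {κ : Cardinal.{u}} {A : Type u} [Group A]
    (hA : SmallProductSurjectionsFactor κ A) {I : Type u} {B : I → Type u} [∀ i, Group (B i)]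
    {f : (∀ i, B i) →* A} (hf : Function.Surjective f) {T : Type u} (p : I → T) (hT : #T < κ) :
    ∃ t, p ⁻¹' {t} ∈ supportFilter f := by
  have hsurj : Function.Surjective (f.comp (piFibersHom B p)) := fun a =>
    let ⟨b, hb⟩ := hf a
    ⟨fun _ i => b i, hb⟩
  obtain ⟨t, h, hfac⟩ := hA T _ hT _ hsurj
  refine ⟨t, fun b hb => ?_⟩
  have hbt : (fun i : {i // p i = t} => b i) = 1 :=
    funext fun i => mem_ker_projHom.mp hb i i.2
  change f (piFibersHom B p fun _ i => b i) = 1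
  rw [← MonoidHom.comp_apply, hfac]
  simp [hbt]

/-- Bergman–Nahlus, direction (i) ⇒ (ii): if every surjective homomorphism
from a direct product of fewer than `κ` groups onto the nontrivial group `A`
factors through one of the canonical projections, then any surjective
homomorphism `f : ∏ᵢ Bᵢ →* A` factors through the quotient onto the
ultraproduct by the (κ-complete) ultrafilter of the subsets `J ⊆ I` through
whose subproducts `f` factors. -/
theorem stmt13 (κ : Cardinal.{u}) (hκ : 2 < κ)
    {A : Type u} [Group A] [Nontrivial A]
    (hfac : ∀ (J : Type u) (C : J → Type u) [∀ j, Group (C j)],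
      Cardinal.mk J < κ → ∀ g : (∀ j, C j) →* A, Function.Surjective g →
        ∃ j₀ : J, ∃ h : C j₀ →* A, g = h.comp (Pi.evalMonoidHom C j₀))
    {I : Type u} (B : I → Type u) [∀ i, Group (B i)]
    (f : (∀ i, B i) →* A) (hf : Function.Surjective f) :
    ∃ U : Ultrafilter I,
      (∀ J : Set I, J ∈ U ↔ ∃ g : (∀ j : J, B j) →* A, f = g.comp (projHom B J)) ∧
      FilterKComplete (U : Filter I) κ ∧
      ∃ h : ((∀ i, B i) ⧸ filterKer (↑U : Filter I) B) →* A,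
        f = h.comp (QuotientGroup.mk' (filterKer (↑U : Filter I) B)) := by
  have hfibers := fun T => exists_fiber_mem_supportFilter hfac hf (T := T)
  have hf_ne_one : f ≠ 1 := by
    rintro rfl
    obtain ⟨a, ha⟩ := exists_ne (1 : A)
    obtain ⟨b, rfl⟩ := hf a
    exact ha rfl
  have := supportFilter_neBot hf_ne_one
  let U := Ultrafilter.ofMemOrComplMem (supportFilter f)
    (Filter.mem_or_compl_mem_of_forall_exists_fiber_mem hκ hfibers)
  exact ⟨U, fun _ => mem_supportFilter_iff,
    Filter.filterKComplete_of_forall_exists_fiber_mem hfibers,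
    QuotientGroup.lift _ f filterKer_supportFilter_le_ker, rfl⟩
end
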